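/- Let E be a finite-dimensional real inner product space, φ: E → ℝ twice differentiable and strictly convex with Bregman divergence d_φ, and f: [0, ∞) → ℝ differentiable. Let x_1, …, x_n ∈ E, θ ∈ E, and w_i = f'(d_φ(x_i, θ)). If Σ_{i=1}^n w_i ≠ 0 and θ = (Σ_i w_i x_i)/(Σ_j w_j) (i.e. θ satisfies the weighted-mean fixed-point condition), then the gradient of the objective θ' ↦ Σ_{i=1}^n f(d_φ(x_i, θ')) vanishes at θ' = θ; that is, θ is a stationary point of the f-separable objective. -/

import Mathlib

open scoped RealInnerProductSpace

/-- The Bregman divergence `d_φ(x, θ) = φ(x) − φ(θ) − ⟨x − θ, ∇φ(θ)⟩`. -/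
noncomputable def bregman {E : Type*} [NormedAddCommGroup E] [InnerProductSpace ℝ E]
    [CompleteSpace E] (φ : E → ℝ) (x θ : E) : ℝ :=
  φ x - φ θ - ⟪x - θ, gradient φ θ⟫

/-!
Differentiating `θ ↦ d_φ(x, θ)` the two first-order terms in `∇φ(θ)` cancel, leaving
`v ↦ -⟪x - θ, H v⟫` with `H` the Hessian of `φ` at `θ`. By the chain rule the differential of
`θ ↦ Σ_i f(d_φ(x_i, θ))` is therefore `v ↦ -⟪Σ_i w_i (x_i - θ), H v⟫` with `w_i = f'(d_φ(x_i, θ))`,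
and the fixed-point condition says exactly that `Σ_i w_i (x_i - θ) = 0`. Since `φ` is convex,
every `d_φ(x_i, ·)` takes values in `[0, ∞)`, so the chain rule needs only the derivative of `f`
within `[0, ∞)`.
-/

open Set

theorem Finset.sum_smul_sub_centerMass {R M ι : Type*} [Field R] [AddCommGroup M] [Module R M]
    {s : Finset ι} {w : ι → R} (z : ι → M) (hw : ∑ i ∈ s, w i ≠ 0) :
    ∑ i ∈ s, w i • (z i - s.centerMass w z) = 0 := by
  simp only [Finset.centerMass, smul_sub, Finset.sum_sub_distrib, ← Finset.sum_smul,
    smul_inv_smul₀ hw, sub_self]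

section Bregman

variable {E : Type*} [NormedAddCommGroup E] [InnerProductSpace ℝ E] [CompleteSpace E]

theorem ConvexOn.inner_sub_gradient_le {s : Set E} {φ : E → ℝ} (hφ : ConvexOn ℝ s φ) {y t : E}
    (hy : y ∈ s) (ht : t ∈ s) (hφt : DifferentiableAt ℝ φ t) :
    ⟪y - t, gradient φ t⟫ ≤ φ y - φ t := by
  have hψ : ConvexOn ℝ (AffineMap.lineMap t y ⁻¹' s) (φ ∘ AffineMap.lineMap t y) :=
    hφ.comp_affineMap _
  have hψ' : HasDerivAt (φ ∘ AffineMap.lineMap t y) ⟪y - t, gradient φ t⟫ (0 : ℝ) := by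
    have := hφt.hasGradientAt.hasFDerivAt.comp_hasDerivAt_of_eq (0 : ℝ)
      AffineMap.hasDerivAt_lineMap (AffineMap.lineMap_apply_zero t y).symm
    rwa [InnerProductSpace.toDual_apply_apply, real_inner_comm] at this
  simpa [slope_def_field] using
    hψ.le_slope_of_hasDerivAt (by simpa) (by simpa) zero_lt_one hψ'

theorem bregman_nonneg {s : Set E} {φ : E → ℝ} (hφ : ConvexOn ℝ s φ) {x θ : E} (hx : x ∈ s)
    (hθ : θ ∈ s) (hφθ : DifferentiableAt ℝ φ θ) : 0 ≤ bregman φ x θ :=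
  sub_nonneg.mpr (hφ.inner_sub_gradient_le hx hθ hφθ)

theorem hasFDerivAt_bregman_right {φ : E → ℝ} {H : E →L[ℝ] E} {θ : E}
    (hφ : DifferentiableAt ℝ φ θ) (hH : HasFDerivAt (gradient φ) H θ) (x : E) :
    HasFDerivAt (bregman φ x) (-(innerSL ℝ (x - θ)).comp H) θ := by
  have h := ((hasFDerivAt_const (φ x) θ).sub hφ.hasGradientAt.hasFDerivAt).sub
    (((hasFDerivAt_id θ).const_sub x).inner ℝ hH)
  refine h.congr_fderiv ?_
  ext v
  simp [fderivInnerCLM_apply, inner_sub_left]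

theorem hasFDerivAt_sum_comp_bregman {ι : Type*} (s : Finset ι) {φ : E → ℝ} {H : E →L[ℝ] E}
    {θ : E} {f : ℝ → ℝ} {w : ι → ℝ} {x : ι → E} (hφ : ConvexOn ℝ univ φ)
    (hφd : Differentiable ℝ φ) (hH : HasFDerivAt (gradient φ) H θ)
    (hf : ∀ i ∈ s, HasDerivWithinAt f (w i) (Ici 0) (bregman φ (x i) θ)) :
    HasFDerivAt (fun t => ∑ i ∈ s, f (bregman φ (x i) t))
      (-(innerSL ℝ (∑ i ∈ s, w i • (x i - θ))).comp H) θ := by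
  have hsummand : ∀ i ∈ s, HasFDerivAt (fun t => f (bregman φ (x i) t))
      (w i • -(innerSL ℝ (x i - θ)).comp H) θ := fun i hi =>
    (hf i hi).comp_hasFDerivAt θ (hasFDerivAt_bregman_right (hφd θ) hH (x i))
      (.of_forall fun t => bregman_nonneg hφ trivial trivial (hφd t))
  refine (HasFDerivAt.fun_sum hsummand).congr_fderiv ?_
  ext v
  simp [mul_sub]

end Bregman

/-- If `θ` satisfies the weighted-mean fixed-point condition
`θ = (Σ_i w_i x_i)/(Σ_j w_j)` with `w_i = f'(d_φ(x_i, θ))`, then `θ` is a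
stationary point of the `f`-separable objective `θ' ↦ Σ_i f(d_φ(x_i, θ'))`. -/
theorem weighted_mean_fixed_point_is_stationary
    {E : Type*} [NormedAddCommGroup E] [InnerProductSpace ℝ E] [FiniteDimensional ℝ E]
    (φ : E → ℝ) (hφdiff : Differentiable ℝ φ)
    (hφdiff2 : Differentiable ℝ (gradient φ))
    (hφconv : StrictConvexOn ℝ Set.univ φ)
    (f : ℝ → ℝ) (hfdiff : DifferentiableOn ℝ f (Set.Ici 0))
    (n : ℕ) (x : Fin n → E) (θ : E)
    (w : Fin n → ℝ)
    (hw : ∀ i, w i = derivWithin f (Set.Ici 0) (bregman φ (x i) θ))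
    (hwsum : ∑ i, w i ≠ 0)
    (hfix : θ = (∑ i, w i)⁻¹ • ∑ i, w i • x i) :
    HasGradientAt (fun t : E => ∑ i, f (bregman φ (x i) t)) 0 θ := by
  have hf : ∀ i ∈ Finset.univ, HasDerivWithinAt f (w i) (Ici 0) (bregman φ (x i) θ) :=
    fun i _ => by
      rw [hw i]
      exact (hfdiff _ (bregman_nonneg hφconv.convexOn trivial trivial (hφdiff θ))).hasDerivWithinAt
  have hcenter : ∑ i, w i • (x i - θ) = 0 := by
    rw [hfix]
    exact Finset.univ.sum_smul_sub_centerMass x hwsum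
  have := hasFDerivAt_sum_comp_bregman Finset.univ hφconv.convexOn hφdiff
    (hφdiff2 θ).hasFDerivAt hf
  rw [hcenter, map_zero, ContinuousLinearMap.zero_comp, neg_zero] at this
  rwa [hasGradientAt_iff_hasFDerivAt, map_zero]
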